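/- arXiv:1811.00719 — 6 statements merged into one kernel-verified Lean document; each statement's English description precedes it below -/
import Mathlib

section
/- Let K be a finite simplicial complex and f: K → ℝ a discrete Morse function. Then for every simplex α of K, at most one of the sets U(α) and L(α) is nonempty; i.e., it is impossible that both |U(α)| = 1 and |L(α)| = 1. -/
open Finset

noncomputable section

attribute [local instance] Classical.propDecidable

/-- A finite abstract simplicial complex on vertex type `V`. -/
structure SComplex (V : Type*) [LinearOrder V] where
  cells : Finset (Finset V)
  nonempty_of_mem : ∀ σ ∈ cells, σ.Nonempty
  down_closed : ∀ σ ∈ cells, ∀ τ ⊆ σ, τ.Nonempty → τ ∈ cells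

variable {V : Type*} [LinearOrder V]

/-- `U(σ)`: immediate cofaces of `σ` in `K` with not-larger `f`-value. -/
def Uset (f : Finset V → ℝ) (K : SComplex V) (σ : Finset V) : Finset (Finset V) :=
  K.cells.filter fun τ => σ ⊂ τ ∧ τ.card = σ.card + 1 ∧ f τ ≤ f σ

/-- `L(σ)`: immediate faces of `σ` in `K` with not-smaller `f`-value. -/
def Lset (f : Finset V → ℝ) (K : SComplex V) (σ : Finset V) : Finset (Finset V) :=
  K.cells.filter fun γ => γ ⊂ σ ∧ σ.card = γ.card + 1 ∧ f σ ≤ f γ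

/-- `f` is a discrete Morse function on `K`. -/
def IsDMF (f : Finset V → ℝ) (K : SComplex V) : Prop :=
  ∀ σ ∈ K.cells, (Uset f K σ).card ≤ 1 ∧ (Lset f K σ).card ≤ 1

/-- A critical cell of `f`. -/
def IsCriticalCell (f : Finset V → ℝ) (K : SComplex V) (σ : Finset V) : Prop :=
  σ ∈ K.cells ∧ Uset f K σ = ∅ ∧ Lset f K σ = ∅

def IsCriticalValue (f : Finset V → ℝ) (K : SComplex V) (c : ℝ) : Prop :=
  ∃ σ, IsCriticalCell f K σ ∧ f σ = c

def IsRegularValue (f : Finset V → ℝ) (K : SComplex V) (a : ℝ) : Prop :=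
  ¬ IsCriticalValue f K a

/-- `{σ < τ}` is a pair of the gradient vector field `V = -∇f`. -/
def GradPair (f : Finset V → ℝ) (K : SComplex V) (σ τ : Finset V) : Prop :=
  σ ∈ K.cells ∧ τ ∈ K.cells ∧ σ ⊂ τ ∧ τ.card = σ.card + 1 ∧ f τ ≤ f σ

/-- The sublevel (level sub-)complex `K^a`: all cells with `f`-value ≤ a and their faces. -/
def subcx (f : Finset V → ℝ) (K : SComplex V) (a : ℝ) : Finset (Finset V) :=
  K.cells.filter fun σ => ∃ τ ∈ K.cells, σ ⊆ τ ∧ f τ ≤ a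

/-- The sublevel set `L^a = {σ ∈ K : f σ ≤ a}` (no closure). -/
def sublevelSet (f : Finset V → ℝ) (K : SComplex V) (a : ℝ) : Finset (Finset V) :=
  K.cells.filter fun σ => f σ ≤ a

/-- One elementary collapse: remove a free pair `σ < τ`. -/
def ElemCollapse (C D : Finset (Finset V)) : Prop :=
  ∃ σ τ : Finset V, σ ∈ C ∧ τ ∈ C ∧ σ ⊂ τ ∧ τ.card = σ.card + 1 ∧
    (∀ ρ ∈ C, σ ⊂ ρ → ρ = τ) ∧ D = (C.erase σ).erase τ

/-- `C` collapses onto `D`. -/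
def Collapses (C D : Finset (Finset V)) : Prop :=
  Relation.ReflTransGen ElemCollapse C D

/-- `L` is a subcomplex of `K`. -/
def IsSubcomplexOf (L : Finset (Finset V)) (K : SComplex V) : Prop :=
  L ⊆ K.cells ∧ ∀ σ ∈ L, ∀ τ ⊆ σ, τ.Nonempty → τ ∈ L

/-- A complex (given as its finset of cells) is collapsible: it collapses to a vertex. -/
def CollapsibleCx (L : Finset (Finset V)) : Prop :=
  ∃ v : V, Collapses L {({v} : Finset V)}

/-- Boundary of an oriented simplex (vertices ordered by the linear order on `V`). -/
noncomputable def bdryCell (σ : Finset V) : Finset V →₀ ℤ :=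
  ∑ v ∈ σ, Finsupp.single (σ.erase v) ((-1 : ℤ) ^ ((σ.filter fun w => w < v).card))

/-- Boundary operator on chains. -/
noncomputable def bdry (c : Finset V →₀ ℤ) : Finset V →₀ ℤ :=
  c.sum fun σ n => n • bdryCell σ

/-- The gradient `V` as a chain map: `V(σ) = -⟨∂τ, σ⟩ τ` when `{σ < τ} ∈ V`, else 0. -/
noncomputable def gradOp (f : Finset V → ℝ) (K : SComplex V) (c : Finset V →₀ ℤ) :
    Finset V →₀ ℤ :=
  c.sum fun σ n => ∑ τ ∈ Uset f K σ, Finsupp.single τ (-(n * bdryCell τ σ))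

/-- The discrete flow operator `φ = Id + ∂V + V∂`. -/
noncomputable def flow (f : Finset V → ℝ) (K : SComplex V) (c : Finset V →₀ ℤ) :
    Finset V →₀ ℤ :=
  c + bdry (gradOp f K c) + gradOp f K (bdry c)

noncomputable def flowCell (f : Finset V → ℝ) (K : SComplex V) (σ : Finset V) :
    Finset V →₀ ℤ :=
  flow f K (Finsupp.single σ 1)

/-- `Φ(A)`: union of the supports of `φ(σ)` over `σ ∈ A`. -/
noncomputable def Phi (f : Finset V → ℝ) (K : SComplex V) (A : Finset (Finset V)) :
    Finset (Finset V) :=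
  A.biUnion fun σ => (flowCell f K σ).support

/-- `Φ̄(A)`: the subcomplex generated by `Φ(A)`. -/
noncomputable def PhiBar (f : Finset V → ℝ) (K : SComplex V) (A : Finset (Finset V)) :
    Finset (Finset V) :=
  (Phi f K A).biUnion fun σ => σ.powerset.filter fun τ => τ.Nonempty

/-- Min-max data `(𝓗, 𝓢)` for `f` on `K`. -/
def IsMinMaxData (f : Finset V → ℝ) (K : SComplex V)
    (H : Set (Finset (Finset V) → Finset (Finset V)))
    (S : Set (Finset (Finset V))) : Prop :=
  (∀ a : ℝ, IsRegularValue f K a →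
    ∃ ε > (0 : ℝ), ∃ h ∈ H, h (sublevelSet f K (a + ε)) ⊆ sublevelSet f K (a - ε)) ∧
  ∀ h ∈ H, ∀ s ∈ S, h s ∈ S

/-- `x` is the maximum value of `f` on the finite set `s`. -/
def IsMaxValOn (f : Finset V → ℝ) (s : Finset (Finset V)) (x : ℝ) : Prop :=
  (∃ σ ∈ s, f σ = x) ∧ ∀ σ ∈ s, f σ ≤ x

/-- Geometric precategory: `L` is covered by `m+1` subcomplexes collapsible in `K`. -/
def precatLE (K : SComplex V) (L : Finset (Finset V)) (m : ℕ) : Prop :=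
  ∃ U : Fin (m + 1) → Finset (Finset V),
    (∀ i, IsSubcomplexOf (U i) K ∧ CollapsibleCx (U i)) ∧ ∀ σ ∈ L, ∃ i, σ ∈ U i

/-- Discrete geometric category of `L` in `K`. -/
noncomputable def dgcat (K : SComplex V) (L : Finset (Finset V)) : ℕ :=
  sInf {m | ∃ L', Collapses L L' ∧ precatLE K L' m}

/-- `σ` lies in the basin `A(v₀)`: some subcomplex of `K` containing `σ` collapses to `v₀`. -/
def InBasin (K : SComplex V) (v₀ : V) (σ : Finset V) : Prop :=
  ∃ L : Finset (Finset V), IsSubcomplexOf L K ∧ Collapses L {({v₀} : Finset V)} ∧ σ ∈ L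

/-- Edge-path connectivity of a complex given by its finset of cells. -/
def ConnectedIn (C : Finset (Finset V)) : Prop :=
  ∀ u v : V, ({u} : Finset V) ∈ C → ({v} : Finset V) ∈ C →
    ∃ (n : ℕ) (p : ℕ → V), p 0 = u ∧ p n = v ∧ ∀ i < n, ({p i, p (i + 1)} : Finset V) ∈ C

/-- Admissible edge path from critical vertex `v₁` ending in the basin of `v₀`. -/
def IsAdmissiblePath (f : Finset V → ℝ) (K : SComplex V) (v₀ v₁ : V)
    (E : Finset (Finset V)) : Prop :=
  ∃ (r : ℕ) (u : ℕ → V), 1 ≤ r ∧ u 0 = v₁ ∧ InBasin K v₀ ({u r} : Finset V) ∧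
    (∀ i < r, u i ≠ u (i + 1) ∧ ({u i, u (i + 1)} : Finset V) ∈ K.cells) ∧
    (∀ i ≤ r, IsCriticalCell f K ({u i} : Finset V) → u i = v₀ ∨ u i = v₁) ∧
    (∀ j, 1 ≤ j → j ≤ r → InBasin K v₀ ({u j} : Finset V) →
      ∀ i, j ≤ i → i < r →
        f ({u i, u (i + 1)} : Finset V) < f ({u (i - 1), u i} : Finset V)) ∧
    E = insert ({v₁} : Finset V)
      ((Finset.range r).image fun i => ({u i, u (i + 1)} : Finset V))

/-- The family `Γ_k` of the discrete Lusternik–Schnirelmann argument. -/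
def GammaFam (f : Finset V → ℝ) (K : SComplex V) (k : ℕ) : Set (Finset (Finset V)) :=
  {L | ∃ a : ℝ, Collapses (subcx f K a) L ∧ k - 1 ≤ dgcat K (subcx f K a)}

theorem stmt0 (f : Finset V → ℝ) (K : SComplex V) (hf : IsDMF f K) :
    ∀ σ ∈ K.cells, ¬ ((Uset f K σ).Nonempty ∧ (Lset f K σ).Nonempty) := by
  rintro σ hσ ⟨⟨τ, hτ⟩, ⟨γ, hγ⟩⟩
  simp only [Uset, Lset, Finset.mem_filter] at hτ hγ
  obtain ⟨hτK, hστ, hcτ, hfτ⟩ := hτ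
  obtain ⟨hγK, hγσ, hcσ, hfγ⟩ := hγ
  -- pick y ∈ τ \ σ
  obtain ⟨y, hyτ, hyσ⟩ : ∃ y ∈ τ, y ∉ σ := by
    by_contra h
    push_neg at h
    have := Finset.eq_of_subset_of_card_le h (by omega)
    exact absurd (this ▸ hστ) (lt_irrefl τ)
  set σ' := insert y γ with hσ'def
  have hyγ : y ∉ γ := fun h => hyσ (hγσ.1 h)
  have hσ'card : σ'.card = γ.card + 1 := Finset.card_insert_of_notMem hyγ
  have hσ'τ : σ' ⊆ τ := Finset.insert_subset hyτ (hγσ.1.trans hστ.1)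
  have hσ'ne : σ' ≠ σ := fun h => hyσ (h ▸ Finset.mem_insert_self y γ)
  have hσ'K : σ' ∈ K.cells :=
    K.down_closed τ hτK σ' hσ'τ ⟨y, Finset.mem_insert_self y γ⟩
  have hσ'ssτ : σ' ⊂ τ := lt_of_le_of_ne hσ'τ (fun h => by
    rw [h] at hσ'card; omega)
  -- f σ' > f γ, else U(γ) has two elements
  have hfσ' : ¬ f σ' ≤ f γ := by
    intro hle
    have h1 : σ ∈ Uset f K γ := by
      simp only [Uset, Finset.mem_filter]
      exact ⟨hσ, hγσ, hcσ, hfγ⟩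
    have h2 : σ' ∈ Uset f K γ := by
      simp only [Uset, Finset.mem_filter]
      exact ⟨hσ'K, lt_of_le_of_ne (Finset.subset_insert y γ)
        (fun h => hyγ (h ▸ Finset.mem_insert_self y γ)), hσ'card, hle⟩
    have hc := (hf γ hγK).1
    have : 1 < (Uset f K γ).card := Finset.one_lt_card.mpr ⟨σ, h1, σ', h2, Ne.symm hσ'ne⟩
    omega
  -- then σ and σ' are both in L(τ)
  have h1 : σ ∈ Lset f K τ := by
    simp only [Lset, Finset.mem_filter]
    exact ⟨hσ, hστ, hcτ, hfτ⟩
  have h2 : σ' ∈ Lset f K τ := by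
    simp only [Lset, Finset.mem_filter]
    refine ⟨hσ'K, hσ'ssτ, by omega, ?_⟩
    push_neg at hfσ'
    linarith
  have hc := (hf τ hτK).2
  have : 1 < (Lset f K τ).card := Finset.one_lt_card.mpr ⟨σ, h1, σ', h2, Ne.symm hσ'ne⟩
  omega
end
end

section
/- Let f: K → ℝ be a discrete Morse function on a finite simplicial complex K. Then there exists an injective discrete Morse function g: K → ℝ that is equivalent to f (i.e., for every codimension-one pair σ < τ, f(σ) < f(τ) iff g(σ) < g(τ)) and has exactly the same critical simplices as f. -/
open Finset

noncomputable section

attribute [local instance] Classical.propDecidable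

variable {V : Type*} [LinearOrder V]

/-! The rank of a cell in a strict total order on `K` that refines the preorder induced by `f` is
an injective function with the same strict comparisons as `f` on every pair `σ ⊂ τ`, provided a
tie `f σ = f τ` always ranks `τ` below `σ`; breaking ties by the reverse colex order, which
extends strict inclusion, does this. Since the sets `U(σ)` and `L(σ)` only depend on these
comparisons, the rank is a discrete Morse function with the same critical cells as `f`. -/

theorem Finset.card_filter_lt_lt_card_filter_lt_iff {β α : Type*} [LinearOrder α]
    {s : Finset β} (k : β → α) {x y : β} (hx : x ∈ s) :
    #{z ∈ s | k z < k x} < #{z ∈ s | k z < k y} ↔ k x < k y := by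
  constructor
  · intro h
    by_contra! hyx
    exact h.not_ge <| card_le_card <| monotone_filter_right s fun _ _ hz => hz.trans_le hyx
  · intro h
    refine card_lt_card <| (ssubset_iff_of_subset ?_).2 ⟨x, ?_, ?_⟩
    · exact monotone_filter_right s fun _ _ hz => hz.trans h
    · exact mem_filter.2 ⟨hx, h⟩
    · simp

section Equivalent

variable {f g : Finset V → ℝ} {K : SComplex V} {σ : Finset V}

theorem Uset_eq_of_lt_iff
    (h : ∀ τ ∈ K.cells, σ ⊂ τ → τ.card = σ.card + 1 → (f σ < f τ ↔ g σ < g τ)) :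
    Uset g K σ = Uset f K σ := by
  ext τ
  simp only [Uset, mem_filter, and_congr_right_iff]
  intro hτ hστ hcard
  rw [← not_lt, ← not_lt, h τ hτ hστ hcard]

theorem Lset_eq_of_lt_iff
    (h : ∀ γ ∈ K.cells, γ ⊂ σ → σ.card = γ.card + 1 → (f γ < f σ ↔ g γ < g σ)) :
    Lset g K σ = Lset f K σ := by
  ext γ
  simp only [Lset, mem_filter, and_congr_right_iff]
  intro hγ hγσ hcard
  rw [← not_lt, ← not_lt, h γ hγ hγσ hcard]

end Equivalent

def morseKey (f : Finset V → ℝ) (σ : Finset V) : ℝ ×ₗ (Colex (Finset V))ᵒᵈ :=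
  toLex (f σ, OrderDual.toDual (toColex σ))

theorem morseKey_lt_morseKey_iff_of_ssubset (f : Finset V → ℝ) {σ τ : Finset V} (h : σ ⊂ τ) :
    morseKey f σ < morseKey f τ ↔ f σ < f τ := by
  have hcolex : ¬ OrderDual.toDual (toColex σ) < OrderDual.toDual (toColex τ) :=
    (Colex.toColex_lt_toColex_of_ssubset h).not_gt
  simp [morseKey, Prod.Lex.toLex_lt_toLex, hcolex]

def morseRank (f : Finset V → ℝ) (K : SComplex V) (σ : Finset V) : ℝ :=
  #{ρ ∈ K.cells | morseKey f ρ < morseKey f σ}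

theorem morseRank_lt_morseRank_iff {f : Finset V → ℝ} {K : SComplex V} {σ τ : Finset V}
    (hσ : σ ∈ K.cells) : morseRank f K σ < morseRank f K τ ↔ morseKey f σ < morseKey f τ := by
  rw [morseRank, morseRank, Nat.cast_lt]
  exact card_filter_lt_lt_card_filter_lt_iff (morseKey f) hσ

theorem morseRank_injOn (f : Finset V → ℝ) (K : SComplex V) :
    Set.InjOn (morseRank f K) (K.cells : Set (Finset V)) := by
  intro σ hσ τ hτ h
  have hkey : morseKey f σ = morseKey f τ := le_antisymm
    (not_lt.1 fun hlt => h.not_gt ((morseRank_lt_morseRank_iff hτ).2 hlt))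
    (not_lt.1 fun hlt => h.not_lt ((morseRank_lt_morseRank_iff hσ).2 hlt))
  simp only [morseKey, toLex_inj, Prod.ext_iff, OrderDual.toDual_inj, toColex_inj] at hkey
  exact hkey.2

theorem lt_iff_morseRank_lt_morseRank {f : Finset V → ℝ} {K : SComplex V} {σ τ : Finset V}
    (hσ : σ ∈ K.cells) (h : σ ⊂ τ) : f σ < f τ ↔ morseRank f K σ < morseRank f K τ := by
  rw [morseRank_lt_morseRank_iff hσ, morseKey_lt_morseKey_iff_of_ssubset f h]

theorem stmt1 (f : Finset V → ℝ) (K : SComplex V) (hf : IsDMF f K) :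
    ∃ g : Finset V → ℝ, IsDMF g K ∧ Set.InjOn g (K.cells : Set (Finset V)) ∧
      (∀ σ ∈ K.cells, ∀ τ ∈ K.cells, σ ⊂ τ → τ.card = σ.card + 1 →
        (f σ < f τ ↔ g σ < g τ)) ∧
      (∀ σ : Finset V, IsCriticalCell f K σ ↔ IsCriticalCell g K σ) := by
  have hU {σ} (hσ : σ ∈ K.cells) : Uset (morseRank f K) K σ = Uset f K σ :=
    Uset_eq_of_lt_iff fun _ _ h _ => lt_iff_morseRank_lt_morseRank hσ h
  have hL {σ} (hσ : σ ∈ K.cells) : Lset (morseRank f K) K σ = Lset f K σ :=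
    Lset_eq_of_lt_iff fun _ hγ h _ => lt_iff_morseRank_lt_morseRank hγ h
  refine ⟨morseRank f K, fun σ hσ => ?_, morseRank_injOn f K,
    fun σ hσ _ _ h _ => lt_iff_morseRank_lt_morseRank hσ h, fun σ => ?_⟩
  · rw [hU hσ, hL hσ]
    exact hf σ hσ
  · unfold IsCriticalCell
    exact ⟨fun ⟨hσ, hσU, hσL⟩ => ⟨hσ, (hU hσ).trans hσU, (hL hσ).trans hσL⟩,
      fun ⟨hσ, hσU, hσL⟩ => ⟨hσ, (hU hσ).symm.trans hσU, (hL hσ).symm.trans hσL⟩⟩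
end
end

section
/- Let V be the gradient vector field associated to a discrete Morse function f on a finite simplicial complex K. Then V admits no nontrivial closed V-path; i.e., there is no sequence α₀ < β₀ > α₁ < β₁ > ⋯ < β_r > α_{r+1} with each {α_i < β_i} a pair in V, r > 0 (or r = 0 with a return), and α_{r+1} = α₀. -/
open Finset

noncomputable section

attribute [local instance] Classical.propDecidable

variable {V : Type*} [LinearOrder V]

theorem stmt3 (f : Finset V → ℝ) (K : SComplex V) (hf : IsDMF f K) :
    ¬ ∃ (r : ℕ) (α β : ℕ → Finset V), 1 ≤ r ∧
        (∀ i ≤ r, GradPair f K (α i) (β i)) ∧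
        (∀ i ≤ r, α (i + 1) ⊂ β i ∧ (β i).card = (α (i + 1)).card + 1 ∧
          α (i + 1) ≠ α i) ∧
        α (r + 1) = α 0 := by
  rintro ⟨r, α, β, hr, h1, h2, hcl⟩
  have step : ∀ i ≤ r, f (α (i + 1)) < f (α i) := by
    intro i hi
    obtain ⟨hαK, hβK, hsub, hcard, hfle⟩ := h1 i hi
    obtain ⟨hsub', hcard', hne⟩ := h2 i hi
    have hαne : (α i).Nonempty := K.nonempty_of_mem _ hαK
    have hαne' : (α (i + 1)).Nonempty := by
      rw [← Finset.card_pos]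
      have := Finset.card_pos.mpr hαne
      omega
    have hαK' : α (i + 1) ∈ K.cells :=
      K.down_closed _ hβK _ hsub'.subset hαne'
    have hlt : f (α (i + 1)) < f (β i) := by
      by_contra hle
      push_neg at hle
      have hm1 : α i ∈ Lset f K (β i) := by
        simp only [Lset, Finset.mem_filter]
        exact ⟨hαK, hsub, hcard, hfle⟩
      have hm2 : α (i + 1) ∈ Lset f K (β i) := by
        simp only [Lset, Finset.mem_filter]
        exact ⟨hαK', hsub', hcard', hle⟩
      have : 1 < (Lset f K (β i)).card :=
        Finset.one_lt_card.mpr ⟨_, hm2, _, hm1, hne⟩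
      have := (hf _ hβK).2
      omega
    exact lt_of_lt_of_le hlt hfle
  have desc : ∀ n ≤ r, f (α (n + 1)) < f (α 0) := by
    intro n hn
    induction n with
    | zero => exact step 0 (Nat.zero_le _)
    | succ m ih =>
      exact lt_trans (step (m + 1) hn) (ih (by omega))
  have := desc r le_rfl
  rw [hcl] at this
  exact lt_irrefl _ this
end
end

section
/- Let f: K → ℝ be a discrete Morse function on a connected finite simplicial complex with two distinct critical vertices v₀ and v₁ with f(v₀) < f(v₁). Then f has a critical edge e with f(e) > f(v₁). (Discrete Mountain Pass Lemma, consequence form.) -/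
/-!
Mountain pass: among all levels `t` at which `v₀` and `v₁` are joined by a path of edges of
value `≤ t`, take the least one; it is the value of an edge `e`. No path stays strictly below
`f e`, and since `f` is injective every other edge of value `≤ f e` lies strictly below it,
so `e` cannot be bypassed. If `e` were paired with a triangle `τ`, the other two edges
of `τ` would lie below `f τ ≤ f e` and bypass `e`. If `e` were paired with a vertex `x`, then
`e` would be the only edge at `x` below level `f e`, and since `x` is neither endpoint,
contracting `e` would again give a path strictly below `f e`. Finally the edge leaving the
critical vertex `v₁` on such a path lies above `f v₁`.
-/

open Finset

noncomputable section

attribute [local instance] Classical.propDecidable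

variable {V : Type*} [LinearOrder V]

theorem SimpleGraph.Reachable.map_of_adj {α β : Type*} {G : SimpleGraph α} {H : SimpleGraph β}
    (φ : α → β) (h : ∀ a b, G.Adj a b → H.Reachable (φ a) (φ b)) {u w : α}
    (huw : G.Reachable u w) : H.Reachable (φ u) (φ w) := by
  obtain ⟨p⟩ := huw
  induction p with
  | nil => rfl
  | cons hadj _ ih => exact (h _ _ hadj).trans ih

namespace SComplex

def edgeGraph (K : SComplex V) (p : Finset V → Prop) : SimpleGraph V where
  Adj a b := a ≠ b ∧ ∃ g ∈ K.cells, g.card = 2 ∧ a ∈ g ∧ b ∈ g ∧ p g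
  symm := ⟨fun _ _ ⟨hab, g, hg, hcard, ha, hb, hp⟩ => ⟨hab.symm, g, hg, hcard, hb, ha, hp⟩⟩
  loopless := ⟨fun _ h => h.1 rfl⟩

variable {K : SComplex V} {p q : Finset V → Prop}

theorem edgeGraph_adj {a b : V} : (K.edgeGraph p).Adj a b ↔
    a ≠ b ∧ ∃ g ∈ K.cells, g.card = 2 ∧ a ∈ g ∧ b ∈ g ∧ p g :=
  Iff.rfl

theorem edgeGraph_mono (h : ∀ g ∈ K.cells, g.card = 2 → p g → q g) :
    K.edgeGraph p ≤ K.edgeGraph q :=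
  fun _ _ hab => by
    obtain ⟨hab, g, hg, hcard, ha, hb, hp⟩ := edgeGraph_adj.1 hab
    exact ⟨hab, g, hg, hcard, ha, hb, h g hg hcard hp⟩

theorem _root_.ConnectedIn.reachable_edgeGraph (hK : ConnectedIn K.cells) {u w : V}
    (hu : {u} ∈ K.cells) (hw : {w} ∈ K.cells) :
    (K.edgeGraph fun _ => True).Reachable u w := by
  obtain ⟨n, P, rfl, rfl, hP⟩ := hK u w hu hw
  clear hu hw
  induction n with
  | zero => rfl
  | succ n ih =>
    refine (ih fun i hi => hP i (by omega)).trans ?_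
    by_cases h : P n = P (n + 1)
    · rw [h]
    · exact SimpleGraph.Adj.reachable <| edgeGraph_adj.2 ⟨h, _, hP n n.lt_succ_self,
        card_pair h, mem_insert_self _ _, mem_insert_of_mem (mem_singleton_self _), trivial⟩

theorem exists_edge_of_reachable (f : Finset V → ℝ) {u w : V} (huw : u ≠ w)
    (h : (K.edgeGraph p).Reachable u w) :
    ∃ e ∈ K.cells, e.card = 2 ∧ p e ∧ (K.edgeGraph fun g => f g ≤ f e).Reachable u w := by
  obtain ⟨c, hc⟩ := h.nonempty_neighborSet_left huw
  obtain ⟨-, g, hg, hcard, -, -, hpg⟩ := edgeGraph_adj.1 hc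
  obtain ⟨e, he, hmax⟩ := exists_max_image (K.cells.filter fun e => e.card = 2 ∧ p e) f
    ⟨g, mem_filter.2 ⟨hg, hcard, hpg⟩⟩
  obtain ⟨heK, hecard, hpe⟩ := mem_filter.1 he
  exact ⟨e, heK, hecard, hpe, h.mono <| edgeGraph_mono fun g hg hgcard hpg =>
    hmax g (mem_filter.2 ⟨hg, hgcard, hpg⟩)⟩

theorem exists_minimax_edge (f : Finset V → ℝ) {u w : V} (huw : u ≠ w)
    (h : (K.edgeGraph fun _ => True).Reachable u w) :
    ∃ e ∈ K.cells, e.card = 2 ∧ (K.edgeGraph fun g => f g ≤ f e).Reachable u w ∧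
      ¬ (K.edgeGraph fun g => f g < f e).Reachable u w := by
  set T := K.cells.filter fun e => e.card = 2 ∧ (K.edgeGraph fun g => f g ≤ f e).Reachable u w
  obtain ⟨e₁, he₁, hcard₁, -, hreach₁⟩ := exists_edge_of_reachable f huw h
  obtain ⟨e, he, hmin⟩ := T.exists_min_image f ⟨e₁, mem_filter.2 ⟨he₁, hcard₁, hreach₁⟩⟩
  obtain ⟨heK, hcard, hreach⟩ := mem_filter.1 he
  refine ⟨e, heK, hcard, hreach, fun hlt => ?_⟩
  obtain ⟨e', he'K, hcard', hlt', hreach'⟩ := exists_edge_of_reachable f huw hlt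
  exact (hmin e' (mem_filter.2 ⟨he'K, hcard', hreach'⟩)).not_gt hlt'

end SComplex

open SComplex

section Morse

variable {f : Finset V → ℝ} {K : SComplex V}

theorem mem_Uset_singleton {g : Finset V} {x : V} (hg : g ∈ K.cells) (hcard : g.card = 2)
    (hx : x ∈ g) (hle : f g ≤ f {x}) : g ∈ Uset f K {x} := by
  have hne : {x} ≠ g := fun h => by simp [← h] at hcard
  exact mem_filter.2 ⟨hg, Finset.ssubset_iff_subset_ne.2 ⟨singleton_subset_iff.2 hx, hne⟩,
    by rw [hcard, card_singleton], hle⟩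

theorem IsCriticalCell.lt_of_mem_edge {v : V} (h : IsCriticalCell f K {v}) {g : Finset V}
    (hg : g ∈ K.cells) (hcard : g.card = 2) (hv : v ∈ g) : f {v} < f g := by
  by_contra! hle
  have hU := mem_Uset_singleton hg hcard hv hle
  simp [h.2.1] at hU

theorem IsCriticalCell.lt_of_reachable {v w : V} {t : ℝ} (h : IsCriticalCell f K {v})
    (hvw : v ≠ w) (hreach : (K.edgeGraph fun g => f g ≤ t).Reachable v w) : f {v} < t := by
  obtain ⟨c, hc⟩ := hreach.nonempty_neighborSet_left hvw
  obtain ⟨-, g, hg, hcard, hv, -, hle⟩ := edgeGraph_adj.1 hc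
  exact (h.lt_of_mem_edge hg hcard hv).trans_le hle

theorem IsDMF.lt_of_mem_Lset (hf : IsDMF f K) {σ τ g : Finset V} (hτ : τ ∈ K.cells)
    (hσ : σ ∈ Lset f K τ) (hg : g ∈ K.cells) (hgτ : g ⊂ τ) (hcard : τ.card = g.card + 1)
    (hgσ : g ≠ σ) : f g < f τ := by
  by_contra! hle
  exact hgσ (card_le_one.1 (hf τ hτ).2 g (mem_filter.2 ⟨hg, hgτ, hcard, hle⟩) σ hσ)

variable (hf : IsDMF f K) (hinj : Set.InjOn f (K.cells : Set (Finset V))) {e : Finset V}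
  (he : e ∈ K.cells) (hcard : e.card = 2) {u w : V}
  (hreach : (K.edgeGraph fun g => f g ≤ f e).Reachable u w)
  (hnot : ¬ (K.edgeGraph fun g => f g < f e).Reachable u w)
include hf hinj he hcard hreach hnot

theorem Uset_eq_empty_of_minimax : Uset f K e = ∅ := by
  refine eq_empty_of_forall_notMem fun τ hτ => hnot ?_
  obtain ⟨hτK, heτ, hτcard, hτle⟩ := mem_filter.1 hτ
  obtain ⟨z, hzτ, hze⟩ := exists_of_ssubset heτ
  have heL : e ∈ Lset f K τ := mem_filter.2 ⟨he, heτ, hτcard, hτle⟩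
  have hz : ∀ x ∈ e, (K.edgeGraph fun g => f g < f e).Adj x z := by
    intro x hx
    have hxz : x ≠ z := ne_of_mem_of_not_mem hx hze
    have hsub : {x, z} ⊆ τ := insert_subset (heτ.1 hx) (singleton_subset_iff.2 hzτ)
    have hK : {x, z} ∈ K.cells := K.down_closed τ hτK _ hsub (insert_nonempty _ _)
    have hτcard' : τ.card = ({x, z} : Finset V).card + 1 := by rw [hτcard, hcard, card_pair hxz]
    have hssub : {x, z} ⊂ τ :=
      Finset.ssubset_iff_subset_ne.2 ⟨hsub, fun h => by simp [← h] at hτcard'⟩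
    have hne : {x, z} ≠ e := fun h => hze (h ▸ mem_insert_of_mem (mem_singleton_self z))
    exact edgeGraph_adj.2 ⟨hxz, {x, z}, hK, card_pair hxz, mem_insert_self _ _,
      mem_insert_of_mem (mem_singleton_self _),
      (hf.lt_of_mem_Lset hτK heL hK hssub hτcard' hne).trans_le hτle⟩
  refine hreach.map_of_adj id fun a b hab => ?_
  obtain ⟨hab, g, hg, hgcard, ha, hb, hle⟩ := edgeGraph_adj.1 hab
  by_cases hge : g = e
  · rw [hge] at ha hb
    exact (hz a ha).reachable.trans (hz b hb).reachable.symm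
  · exact SimpleGraph.Adj.reachable <| edgeGraph_adj.2
      ⟨hab, g, hg, hgcard, ha, hb, hle.lt_of_ne fun h => hge (hinj hg he h)⟩

theorem Lset_eq_empty_of_minimax (hu : IsCriticalCell f K {u}) (hw : IsCriticalCell f K {w}) :
    Lset f K e = ∅ := by
  refine eq_empty_of_forall_notMem fun γ hγ => hnot ?_
  obtain ⟨hγK, hγe, hecard, hle⟩ := mem_filter.1 hγ
  obtain ⟨x, rfl⟩ := card_eq_one.1 (by omega : γ.card = 1)
  have hx : x ∈ e := hγe.1 (mem_singleton_self x)
  obtain ⟨y, hy⟩ := card_eq_one.1 (by rw [card_erase_of_mem hx, hcard] : (e.erase x).card = 1)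
  have hpendant : ∀ g ∈ K.cells, g.card = 2 → x ∈ g → f g ≤ f e → g = e :=
    fun g hg hgcard hxg hge => card_le_one.1 (hf _ hγK).1
      g (mem_Uset_singleton hg hgcard hxg (hge.trans hle))
      e (mem_Uset_singleton he hcard hx hle)
  have hxu : u ≠ x := fun h => (hu.lt_of_mem_edge he hcard (h ▸ hx)).not_ge (h ▸ hle)
  have hxw : w ≠ x := fun h => (hw.lt_of_mem_edge he hcard (h ▸ hx)).not_ge (h ▸ hle)
  -- contract `e` onto its other vertex `y`
  have hφe : ∀ a ∈ e, Function.update id x y a = y := fun a ha => by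
    by_cases hax : a = x
    · rw [hax, Function.update_self]
    · rw [Function.update_of_ne hax, id, ← mem_singleton, ← hy]
      exact mem_erase.2 ⟨hax, ha⟩
  have hcontract := hreach.map_of_adj (Function.update id x y) fun a b hab => by
    obtain ⟨hab, g, hg, hgcard, ha, hb, hle⟩ := edgeGraph_adj.1 hab
    by_cases hxg : x ∈ g
    · rw [hpendant g hg hgcard hxg hle] at ha hb
      rw [hφe a ha, hφe b hb]
    · rw [Function.update_of_ne (ne_of_mem_of_not_mem ha hxg),
        Function.update_of_ne (ne_of_mem_of_not_mem hb hxg)]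
      exact SimpleGraph.Adj.reachable <| edgeGraph_adj.2
        ⟨hab, g, hg, hgcard, ha, hb, hle.lt_of_ne fun h => hxg (hinj hg he h ▸ hx)⟩
  rwa [Function.update_of_ne hxu, Function.update_of_ne hxw] at hcontract

end Morse

theorem stmt10_general (f : Finset V → ℝ) (K : SComplex V) (hf : IsDMF f K)
    (hinj : Set.InjOn f (K.cells : Set (Finset V))) (hconn : ConnectedIn K.cells)
    (v₀ v₁ : V) (hne : v₀ ≠ v₁)
    (h0 : IsCriticalCell f K ({v₀} : Finset V))
    (h1 : IsCriticalCell f K ({v₁} : Finset V)) :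
    ∃ e ∈ K.cells, e.card = 2 ∧ IsCriticalCell f K e ∧ f ({v₁} : Finset V) < f e := by
  obtain ⟨e, he, hcard, hreach, hnot⟩ :=
    exists_minimax_edge f hne (hconn.reachable_edgeGraph h0.1 h1.1)
  refine ⟨e, he, hcard, ⟨he, ?_, ?_⟩, h1.lt_of_reachable hne.symm hreach.symm⟩
  · exact Uset_eq_empty_of_minimax hf hinj he hcard hreach hnot
  · exact Lset_eq_empty_of_minimax hf hinj he hcard hreach hnot h0 h1

theorem stmt10 (f : Finset V → ℝ) (K : SComplex V) (hf : IsDMF f K)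
    (hinj : Set.InjOn f (K.cells : Set (Finset V))) (hconn : ConnectedIn K.cells)
    (v₀ v₁ : V) (hne : v₀ ≠ v₁)
    (h0 : IsCriticalCell f K ({v₀} : Finset V))
    (h1 : IsCriticalCell f K ({v₁} : Finset V))
    (hlt : f ({v₀} : Finset V) < f ({v₁} : Finset V)) :
    ∃ e ∈ K.cells, e.card = 2 ∧ IsCriticalCell f K e ∧ f ({v₁} : Finset V) < f e :=
  stmt10_general f K hf hinj hconn v₀ v₁ hne h0 h1
end
end

section
/- Let f: K → ℝ be an injective discrete Morse function on a finite simplicial complex and suppose a is a regular value with f⁻¹(a) = {σ} for a unique simplex σ. Then σ is regular, and its gradient partner τ (the unique simplex with {σ < τ} ∈ V or {τ < σ} ∈ V) also lies in K^a; moreover if {σ < τ} ∈ V then f(τ) < a, and if {τ < σ} ∈ V then τ is a free face of σ in K^a and K^a ↘ K^a \ {τ, σ}. -/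
open Finset

noncomputable section

attribute [local instance] Classical.propDecidable

variable {V : Type*} [LinearOrder V]

section Aux
variable {V : Type*} [LinearOrder V]

lemma mem_Uset' {f : Finset V → ℝ} {K : SComplex V} {σ τ : Finset V} :
    τ ∈ Uset f K σ ↔ τ ∈ K.cells ∧ σ ⊂ τ ∧ τ.card = σ.card + 1 ∧ f τ ≤ f σ := by
  simp [Uset, Finset.mem_filter, and_assoc]

lemma mem_Lset' {f : Finset V → ℝ} {K : SComplex V} {γ σ : Finset V} :
    γ ∈ Lset f K σ ↔ γ ∈ K.cells ∧ γ ⊂ σ ∧ σ.card = γ.card + 1 ∧ f σ ≤ f γ := by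
  simp [Lset, Finset.mem_filter, and_assoc]

/-- Forman's exclusivity lemma: if `Lset σ` is nonempty then `Uset σ` is empty. -/
lemma Uset_eq_empty_of_Lset {f : Finset V → ℝ} {K : SComplex V} (hf : IsDMF f K)
    {σ γ : Finset V} (hσ : σ ∈ K.cells) (hγ : γ ∈ Lset f K σ) : Uset f K σ = ∅ := by
  by_contra hne
  obtain ⟨τ, hτ⟩ := Finset.nonempty_iff_ne_empty.2 hne
  obtain ⟨hτK, hστ, hcτ, hfτ⟩ := mem_Uset'.1 hτ
  obtain ⟨hγK, hγσ, hcσ, hfσ⟩ := mem_Lset'.1 hγ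
  obtain ⟨y, hyτ, hyσ⟩ := Finset.exists_of_ssubset hστ
  have hyγ : y ∉ γ := fun h => hyσ (hγσ.1 h)
  set σ' := insert y γ with hσ'def
  have hσ'c : σ'.card = γ.card + 1 := Finset.card_insert_of_notMem hyγ
  have hσ'τ : σ' ⊆ τ := by
    intro z hz
    rcases Finset.mem_insert.1 hz with h | h
    · exact h ▸ hyτ
    · exact hστ.1 (hγσ.1 h)
  have hσ'K : σ' ∈ K.cells :=
    K.down_closed τ hτK σ' hσ'τ ⟨y, Finset.mem_insert_self _ _⟩
  have hσ'ne : σ' ≠ σ := fun h => hyσ (h ▸ Finset.mem_insert_self y γ)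
  have hγσ' : γ ⊂ σ' := Finset.ssubset_insert hyγ
  have hσ'τss : σ' ⊂ τ := by
    refine Finset.ssubset_iff_subset_ne.2 ⟨hσ'τ, fun h => ?_⟩
    have := hcτ
    rw [← h, hσ'c] at this
    omega
  have hcτ' : τ.card = σ'.card + 1 := by omega
  have hσUγ : σ ∈ Uset f K γ := mem_Uset'.2 ⟨hσ, hγσ, hcσ, hfσ⟩
  have hσLτ : σ ∈ Lset f K τ := mem_Lset'.2 ⟨hσ, hστ, hcτ, hfτ⟩
  have h1 : ¬ f σ' ≤ f γ := by
    intro h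
    have hmem : σ' ∈ Uset f K γ := mem_Uset'.2 ⟨hσ'K, hγσ', hσ'c, h⟩
    exact hσ'ne (Finset.card_le_one.1 (hf γ hγK).1 _ hmem _ hσUγ)
  have h2 : ¬ f τ ≤ f σ' := by
    intro h
    have hmem : σ' ∈ Lset f K τ := mem_Lset'.2 ⟨hσ'K, hσ'τss, hcτ', h⟩
    exact hσ'ne (Finset.card_le_one.1 (hf τ hτK).2 _ hmem _ hσLτ)
  push_neg at h1 h2
  linarith

/-- Key lemma: under the hypotheses, any cell `μ` with `f μ ≤ a` strictly
containing `τ` must equal `σ`. -/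
lemma key_lemma {f : Finset V → ℝ} {K : SComplex V} (hf : IsDMF f K)
    {σ τ : Finset V} {a : ℝ} (hσK : σ ∈ K.cells) (hσa : f σ = a)
    (hτ : τ ∈ Lset f K σ) (hU : Uset f K σ = ∅) :
    ∀ n (μ : Finset V), μ.card ≤ n → μ ∈ K.cells → f μ ≤ a → τ ⊂ μ → μ = σ := by
  obtain ⟨hτK, hτσ, hcard, hfτ⟩ := mem_Lset'.1 hτ
  intro n
  induction n with
  | zero =>
    intro μ hn _ _ hτμ
    have h1 : 0 < μ.card := Finset.card_pos.2 ((K.nonempty_of_mem τ hτK).mono hτμ.subset)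
    omega
  | succ n ih =>
    intro μ hn hμK hμa hτμ
    by_cases hc : μ.card = τ.card + 1
    · -- codimension 1: use that Uset τ has at most one element
      have hσU : σ ∈ Uset f K τ := mem_Uset'.2 ⟨hσK, hτσ, hcard, hfτ⟩
      have hμU : μ ∈ Uset f K τ :=
        mem_Uset'.2 ⟨hμK, hτμ, hc, by have h := hfτ; rw [hσa] at h; linarith⟩
      exact Finset.card_le_one.1 (hf τ hτK).1 _ hμU _ hσU
    · have hlt := Finset.card_lt_card hτμ
      have hsub : τ ⊆ μ := hτμ.subset
      have hcd : 2 ≤ (μ \ τ).card := by rw [Finset.card_sdiff_of_subset hsub]; omega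
      obtain ⟨x, hx, y, hy, hxy⟩ := Finset.one_lt_card.1 (by omega : 1 < (μ \ τ).card)
      -- at most one of the two erases lies in Lset μ
      have hkey : ∃ z ∈ μ \ τ, μ.erase z ∉ Lset f K μ := by
        by_contra h
        push_neg at h
        have hx' := h x hx
        have hy' := h y hy
        have heq : μ.erase x = μ.erase y :=
          Finset.card_le_one.1 (hf μ hμK).2 _ hx' _ hy'
        have hxμ : x ∈ μ := (Finset.mem_sdiff.1 hx).1
        have : x ∈ μ.erase x := heq ▸ Finset.mem_erase.2 ⟨hxy, hxμ⟩
        exact (Finset.notMem_erase x μ) this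
      obtain ⟨z, hz, hzL⟩ := hkey
      obtain ⟨hzμ, hzτ⟩ := Finset.mem_sdiff.1 hz
      set ν := μ.erase z with hνdef
      have hνμ : ν ⊂ μ := Finset.erase_ssubset hzμ
      have hνc : ν.card + 1 = μ.card := by
        rw [hνdef, Finset.card_erase_of_mem hzμ]; omega
      have hνK : ν ∈ K.cells := by
        refine K.down_closed μ hμK ν hνμ.subset (Finset.card_pos.1 ?_)
        omega
      have hτν : τ ⊂ ν := by
        refine Finset.ssubset_iff_subset_ne.2 ⟨Finset.subset_erase.2 ⟨hsub, hzτ⟩, ?_⟩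
        intro h
        rw [← h] at hνc
        omega
      have hfν : f ν < f μ := by
        by_contra h
        push_neg at h
        exact hzL (mem_Lset'.2 ⟨hνK, hνμ, hνc.symm, h⟩)
      have hνσ : ν = σ := ih ν (by omega) hνK (by linarith) hτν
      have : μ ∈ Uset f K σ :=
        mem_Uset'.2 ⟨hμK, hνσ ▸ hνμ, by rw [← hνσ]; omega, by rw [hσa]; exact hμa⟩
      rw [hU] at this
      exact absurd this (Finset.notMem_empty μ)

end Aux

theorem stmt18 (f : Finset V → ℝ) (K : SComplex V) (hf : IsDMF f K)
    (hinj : Set.InjOn f (K.cells : Set (Finset V))) (a : ℝ)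
    (hreg : IsRegularValue f K a) (σ : Finset V) (hσK : σ ∈ K.cells)
    (hσa : f σ = a) (huniq : ∀ ρ ∈ K.cells, f ρ = a → ρ = σ) :
    ¬ IsCriticalCell f K σ ∧
    ∃ τ : Finset V, (GradPair f K σ τ ∨ GradPair f K τ σ) ∧ τ ∈ subcx f K a ∧
      (GradPair f K σ τ → f τ < a) ∧
      (GradPair f K τ σ →
        (∀ ρ ∈ subcx f K a, τ ⊂ ρ → ρ = σ) ∧
        Collapses (subcx f K a) (((subcx f K a).erase τ).erase σ)) := by
  have hnotcrit : ¬ IsCriticalCell f K σ := fun h => hreg ⟨σ, h, hσa⟩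
  refine ⟨hnotcrit, ?_⟩
  have hσsub : σ ∈ subcx f K a :=
    Finset.mem_filter.2 ⟨hσK, σ, hσK, subset_rfl, hσa.le⟩
  by_cases hUe : Uset f K σ = ∅
  · -- then Lset σ is nonempty
    have hLne : Lset f K σ ≠ ∅ := fun h => hnotcrit ⟨hσK, hUe, h⟩
    obtain ⟨τ, hτ⟩ := Finset.nonempty_iff_ne_empty.2 hLne
    obtain ⟨hτK, hτσ, hcard, hfτ⟩ := mem_Lset'.1 hτ
    have hτne : τ ≠ σ := hτσ.ne
    have hfτa : a < f τ := by
      rcases lt_or_eq_of_le (hσa ▸ hfτ) with h | h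
      · exact h
      · exact absurd (huniq τ hτK h.symm) hτne
    have hgp : GradPair f K τ σ := ⟨hτK, hσK, hτσ, hcard, hσa ▸ hfτ⟩
    have hτsub : τ ∈ subcx f K a :=
      Finset.mem_filter.2 ⟨hτK, σ, hσK, hτσ.subset, hσa.le⟩
    have hfree : ∀ ρ ∈ subcx f K a, τ ⊂ ρ → ρ = σ := by
      intro ρ hρ hτρ
      obtain ⟨hρK, μ, hμK, hρμ, hμa⟩ := Finset.mem_filter.1 hρ
      have hτμ : τ ⊂ μ := hτρ.trans_subset hρμ
      have hμσ : μ = σ := key_lemma hf hσK hσa hτ hUe μ.card μ le_rfl hμK hμa hτμ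
      have hρσ : ρ ⊆ σ := hμσ ▸ hρμ
      refine Finset.eq_of_subset_of_card_le hρσ ?_
      have := Finset.card_lt_card hτρ
      omega
    refine ⟨τ, Or.inr hgp, hτsub, ?_, fun _ => ⟨hfree, ?_⟩⟩
    · intro hgp'
      exact absurd (hτσ.trans hgp'.2.2.1) (ssubset_irrefl τ)
    · exact Relation.ReflTransGen.single
        ⟨τ, σ, hτsub, hσsub, hτσ, hcard, hfree, rfl⟩
  · obtain ⟨τ, hτ⟩ := Finset.nonempty_iff_ne_empty.2 hUe
    obtain ⟨hτK, hστ, hcard, hfτ⟩ := mem_Uset'.1 hτ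
    have hτne : τ ≠ σ := hστ.ne'
    have hgp : GradPair f K σ τ := ⟨hσK, hτK, hστ, hcard, hfτ⟩
    have hfτa : f τ < a := by
      rcases lt_or_eq_of_le (hσa ▸ hfτ) with h | h
      · exact h
      · exact absurd (huniq τ hτK h) hτne
    have hτsub : τ ∈ subcx f K a :=
      Finset.mem_filter.2 ⟨hτK, τ, hτK, subset_rfl, hfτa.le⟩
    refine ⟨τ, Or.inl hgp, hτsub, fun _ => hfτa, fun hgp' => ?_⟩
    exact absurd (hστ.trans hgp'.2.2.1) (ssubset_irrefl σ)
end
end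

section
/- Let f: K → ℝ be a discrete Morse function on a connected finite simplicial complex K, and let v₁ be a critical vertex that is not the global minimum of f restricted to vertices. If the sublevel complex K^{f(v₁)} is disconnected, then f has a critical edge e with f(e) > f(v₁). -/
/-! Lower the level from above the maximum of `f` down to `a = f(v₁)`. By injectivity, passing
the value of a single cell `τ` either adds a free pair `ρ < τ` with `ρ ∈ L(τ)` (an elementary
collapse), or adds `τ` alone, which is then critical unless it is already a face of a lower cell.
Collapses preserve edge-path connectivity between the surviving vertices, and so does adding a
single cell that is not an edge. Hence, if no critical edge has value above `a`, connectivity of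
`K` descends to `K^a`. -/

open Finset

noncomputable section

attribute [local instance] Classical.propDecidable

variable {V : Type*} [LinearOrder V]

section Reachability

variable {α : Type*} {C D : Finset (Finset α)}

def EdgeStep (C : Finset (Finset α)) (x y : α) : Prop := ({x, y} : Finset α) ∈ C

lemma reflTransGen_edgeStep_of_path {n : ℕ} {p : ℕ → α}
    (hp : ∀ i < n, ({p i, p (i + 1)} : Finset α) ∈ C) :
    Relation.ReflTransGen (EdgeStep C) (p 0) (p n) := by
  induction n with
  | zero => exact .refl
  | succ n ih => exact (ih fun i hi => hp i (by omega)).tail (hp n (by omega))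

lemma exists_path_of_reflTransGen_edgeStep {u v : α}
    (h : Relation.ReflTransGen (EdgeStep C) u v) :
    ∃ (n : ℕ) (p : ℕ → α), p 0 = u ∧ p n = v ∧ ∀ i < n, ({p i, p (i + 1)} : Finset α) ∈ C := by
  induction h with
  | refl => exact ⟨0, fun _ => u, rfl, rfl, by omega⟩
  | @tail w x _ hwx ih =>
      obtain ⟨n, p, h0, hn, hp⟩ := ih
      refine ⟨n + 1, fun i => if i ≤ n then p i else x, by simp [h0], by simp, fun i hi => ?_⟩
      rcases Nat.lt_succ_iff_lt_or_eq.mp hi with hlt | rfl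
      · simpa [hlt.le, Nat.succ_le_of_lt hlt] using hp i hlt
      · simpa [hn, EdgeStep] using hwx

lemma connectedIn_iff : ConnectedIn C ↔ ∀ u v : α, ({u} : Finset α) ∈ C →
    ({v} : Finset α) ∈ C → Relation.ReflTransGen (EdgeStep C) u v := by
  refine forall₄_congr fun u v _ _ => ⟨?_, exists_path_of_reflTransGen_edgeStep⟩
  rintro ⟨n, p, rfl, rfl, hp⟩
  exact reflTransGen_edgeStep_of_path hp

lemma reflTransGen_edgeStep_mono (hCD : C ⊆ D) {u v : α}
    (h : Relation.ReflTransGen (EdgeStep C) u v) : Relation.ReflTransGen (EdgeStep D) u v :=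
  Relation.ReflTransGen.mono (fun _ _ hxy => hCD hxy) _ _ h

lemma reflTransGen_edgeStep_of_insert {τ : Finset α} (hτ : τ.card ≠ 2) {u v : α}
    (h : Relation.ReflTransGen (EdgeStep (insert τ D)) u v) :
    Relation.ReflTransGen (EdgeStep D) u v := by
  refine Relation.reflTransGen_closed (fun x y hxy => ?_) _ _ h
  by_cases hxy_eq : x = y
  · exact hxy_eq ▸ .refl
  · have hne : ({x, y} : Finset α) ≠ τ := fun h => hτ (h ▸ card_pair hxy_eq)
    exact .single ((mem_insert.mp hxy).resolve_left hne)

/-- The free vertex `w` of a collapsed edge `{w', w}` is retracted onto `w'`. -/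
lemma reflTransGen_edgeStep_erase_vertex_edge {w w' : α} (hw' : w' ≠ w)
    (hfree : ∀ ν ∈ C, {w} ⊂ ν → ν = {w', w}) {u v : α}
    (hu : ({u} : Finset α) ∈ (C.erase {w}).erase {w', w})
    (hv : ({v} : Finset α) ∈ (C.erase {w}).erase {w', w})
    (h : Relation.ReflTransGen (EdgeStep C) u v) :
    Relation.ReflTransGen (EdgeStep ((C.erase {w}).erase {w', w})) u v := by
  have hw : ∀ σ ∈ (C.erase {w}).erase {w', w}, w ∉ σ := by
    intro σ hσ hwσ
    simp only [mem_erase] at hσ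
    exact hσ.1 (hfree σ hσ.2.2
      (_root_.ssubset_iff_subset_ne.mpr ⟨by simpa using hwσ, Ne.symm hσ.2.1⟩))
  let φ : α → α := fun x => if x = w then w' else x
  have hφ : ∀ x, ({x} : Finset α) ∈ (C.erase {w}).erase {w', w} → φ x = x :=
    fun x hx => if_neg fun hxw => hw _ hx (by simp [hxw])
  have hstep : ∀ x y, EdgeStep C x y →
      Relation.ReflTransGen (EdgeStep ((C.erase {w}).erase {w', w})) (φ x) (φ y) := by
    intro x y hxy
    by_cases hD : ({x, y} : Finset α) ∈ (C.erase {w}).erase {w', w}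
    · have hx : x ≠ w := fun hxw => hw _ hD (by simp [hxw])
      have hy : y ≠ w := fun hyw => hw _ hD (by simp [hyw])
      simpa [φ, hx, hy] using Relation.ReflTransGen.single hD
    · have hsub : ({x, y} : Finset α) ⊆ {w', w} := by
        simp only [mem_erase, not_and_or, not_not] at hD
        rcases hD with h | h | h
        · exact h.le
        · simp [h]
        · exact absurd hxy h
      have hφw' : ∀ z ∈ ({w', w} : Finset α), φ z = w' := by simp [φ, hw']
      rw [hφw' x (hsub (by simp)), hφw' y (hsub (by simp))]
  have := Relation.ReflTransGen.lift' φ hstep u v h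
  rwa [Function.onFun, hφ u hu, hφ v hv] at this

lemma ElemCollapse.reflTransGen_edgeStep (hC : ∀ σ ∈ C, ∀ τ ⊆ σ, τ.Nonempty → τ ∈ C)
    (hCD : ElemCollapse C D) {u v : α} (hu : ({u} : Finset α) ∈ D) (hv : ({v} : Finset α) ∈ D)
    (h : Relation.ReflTransGen (EdgeStep C) u v) : Relation.ReflTransGen (EdgeStep D) u v := by
  obtain ⟨ρ, τ, -, hτ, hρτ, hcard, hfree, rfl⟩ := hCD
  obtain ⟨z, hzρ, rfl⟩ := exists_eq_insert_iff.mpr ⟨hρτ.subset, hcard.symm⟩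
  by_cases hρ1 : ρ.card = 1
  · obtain ⟨w, rfl⟩ := card_eq_one.mp hρ1
    exact reflTransGen_edgeStep_erase_vertex_edge (by simpa using hzρ) hfree hu hv h
  refine Relation.reflTransGen_closed (fun x y hxy => ?_) _ _ h
  by_cases hxy_eq : x = y
  · exact hxy_eq ▸ .refl
  by_cases hD : ({x, y} : Finset α) ∈ (C.erase ρ).erase (insert z ρ)
  · exact .single hD
  obtain rfl : ({x, y} : Finset α) = ρ := by
    simp only [mem_erase, not_and_or, not_not] at hD
    rcases hD with h | h | h
    · have := congrArg card h
      rw [card_pair hxy_eq, card_insert_of_notMem hzρ] at this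
      omega
    · exact h
    · exact absurd hxy h
  -- the collapsed edge `{x, y}` is bypassed through the third vertex `z` of the triangle
  have hD : ∀ t ∈ ({x, y} : Finset α),
      ({t, z} : Finset α) ∈ (C.erase {x, y}).erase (insert z {x, y}) := by
    intro t ht
    have hsub : ({t, z} : Finset α) ⊆ insert z {x, y} :=
      insert_subset (mem_insert_of_mem ht) (by simp)
    have hcard3 : (insert z {x, y} : Finset α).card = 3 := by
      rw [card_insert_of_notMem hzρ, card_pair hxy_eq]
    refine mem_erase.mpr ⟨fun h => ?_, mem_erase.mpr ⟨fun h => hzρ (h ▸ by simp), ?_⟩⟩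
    · have := h ▸ card_le_two (a := t) (b := z)
      omega
    · exact hC _ hτ _ hsub (insert_nonempty _ _)
  exact (Relation.ReflTransGen.single (hD x (by simp))).tail
    (by rw [EdgeStep, pair_comm z y]; exact hD y (by simp))

end Reachability

lemma exists_le_lt_forall_lt_imp_le {β : Type*} [LinearOrder β] (s : Finset β) {a t : β}
    (h : a < t) : ∃ b, a ≤ b ∧ b < t ∧ ∀ x ∈ s, x < t → x ≤ b := by
  refine ⟨(insert a (s.filter (· < t))).max' (insert_nonempty _ _),
    le_max' _ _ (mem_insert_self _ _), (max'_lt_iff _ _).mpr fun y hy => ?_,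
    fun x hx hxt => le_max' _ _ (mem_insert_of_mem (mem_filter.mpr ⟨hx, hxt⟩))⟩
  obtain rfl | hy := mem_insert.mp hy
  exacts [h, (mem_filter.mp hy).2]

section Sublevel

variable {f : Finset V → ℝ} {K : SComplex V} {σ τ : Finset V} {a b : ℝ}

lemma mem_subcx : σ ∈ subcx f K a ↔ σ ∈ K.cells ∧ ∃ ν ∈ K.cells, σ ⊆ ν ∧ f ν ≤ a :=
  mem_filter

lemma mem_subcx_of_subset (hτ : τ ∈ K.cells) (hστ : σ ⊆ τ) (hσ : σ.Nonempty) (h : f τ ≤ a) :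
    σ ∈ subcx f K a :=
  mem_subcx.mpr ⟨K.down_closed τ hτ σ hστ hσ, τ, hτ, hστ, h⟩

lemma self_mem_subcx (hτ : τ ∈ K.cells) : τ ∈ subcx f K (f τ) :=
  mem_subcx_of_subset hτ subset_rfl (K.nonempty_of_mem τ hτ) le_rfl

lemma subcx_subset_subcx (h : ∀ σ ∈ K.cells, f σ ≤ a → f σ ≤ b) :
    subcx f K a ⊆ subcx f K b := by
  intro σ hσ
  obtain ⟨hσK, ν, hνK, hσν, hν⟩ := mem_subcx.mp hσ
  exact mem_subcx.mpr ⟨hσK, ν, hνK, hσν, h ν hνK hν⟩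

lemma subcx_mono (hab : a ≤ b) : subcx f K a ⊆ subcx f K b :=
  subcx_subset_subcx fun _ _ h => h.trans hab

lemma subcx_down_closed : ∀ σ ∈ subcx f K a, ∀ τ ⊆ σ, τ.Nonempty → τ ∈ subcx f K a := by
  intro σ hσ τ hτσ hτ
  obtain ⟨-, ν, hνK, hσν, hν⟩ := mem_subcx.mp hσ
  exact mem_subcx_of_subset hνK (hτσ.trans hσν) hτ hν

end Sublevel

section Morse

variable {f : Finset V → ℝ} {K : SComplex V} {σ τ ρ ν : Finset V}

lemma erase_mem_Lset (hτ : τ ∈ K.cells) {z : V} (hz : z ∈ τ) (hne : (τ.erase z).Nonempty)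
    (h : f τ ≤ f (τ.erase z)) : τ.erase z ∈ Lset f K τ :=
  mem_filter.mpr ⟨K.down_closed τ hτ _ (erase_subset z τ) hne, erase_ssubset hz,
    (card_erase_add_one hz).symm, h⟩

lemma exists_eq_erase_of_forall_erase_mem_Lset (hf : IsDMF f K) (hτ : τ ∈ K.cells)
    (hστ : σ ⊂ τ) (h : ∀ z ∈ τ \ σ, τ.erase z ∈ Lset f K τ) : ∃ z ∈ τ \ σ, σ = τ.erase z := by
  obtain ⟨z, hz⟩ := sdiff_nonempty.mpr (not_subset_of_ssubset hστ)
  refine ⟨z, hz, (subset_erase.mpr ⟨hστ.subset, (mem_sdiff.mp hz).2⟩).antisymm fun w hw => ?_⟩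
  by_contra hwσ
  obtain ⟨hwz, hwτ⟩ := mem_erase.mp hw
  exact hwz ((erase_inj _ hwτ).mp
    (card_le_one.mp (hf τ hτ).2 _ (h w (mem_sdiff.mpr ⟨hwτ, hwσ⟩)) _ (h z hz)))

/-- Forman's lemma. -/
lemma le_of_mem_Uset_of_ssubset (hf : IsDMF f K) (hσ : σ ∈ K.cells) (hτ : τ ∈ Uset f K σ)
    (hρ : ρ ∈ K.cells) (hσρ : σ ⊂ ρ) : f τ ≤ f ρ := by
  obtain ⟨-, -, -, hτσ⟩ := mem_filter.mp hτ
  induction hn : ρ.card using Nat.strong_induction_on generalizing ρ with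
  | _ n IH =>
  by_contra! hlt
  obtain hfacet | hcard := show ρ.card = σ.card + 1 ∨ σ.card + 2 ≤ ρ.card by
    have := card_lt_card hσρ; omega
  · have hρU : ρ ∈ Uset f K σ := mem_filter.mpr ⟨hρ, hσρ, hfacet, (hlt.trans_le hτσ).le⟩
    exact hlt.ne (congrArg f (card_le_one.mp (hf σ hσ).1 _ hρU _ hτ))
  -- otherwise every facet of `ρ` containing `σ` lies in `L(ρ)`, and there are at least two
  have hL : ∀ z ∈ ρ \ σ, ρ.erase z ∈ Lset f K ρ := by
    intro z hz
    obtain ⟨hzρ, hzσ⟩ := mem_sdiff.mp hz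
    have hσz : σ ⊆ ρ.erase z := subset_erase.mpr ⟨hσρ.subset, hzσ⟩
    have hne := (K.nonempty_of_mem σ hσ).mono hσz
    have hcardz := card_erase_add_one hzρ
    refine erase_mem_Lset hρ hzρ hne (hlt.le.trans ?_)
    exact IH _ (by omega) (K.down_closed ρ hρ _ (erase_subset z ρ) hne)
      ⟨hσz, fun h => by have := card_le_card h; omega⟩ rfl
  obtain ⟨z, hz, rfl⟩ := exists_eq_erase_of_forall_erase_mem_Lset hf hρ hσρ hL
  have := card_erase_add_one (mem_sdiff.mp hz).1
  omega

section Gap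

variable {b : ℝ}

lemma eq_or_mem_Lset_of_mem_subcx (hf : IsDMF f K) (hinj : Set.InjOn f (K.cells : Set (Finset V)))
    (hτ : τ ∈ K.cells) (hgap : ∀ σ ∈ K.cells, f σ < f τ → f σ ≤ b)
    (hσ : σ ∈ subcx f K (f τ)) (hσb : σ ∉ subcx f K b) : σ = τ ∨ σ ∈ Lset f K τ := by
  obtain ⟨hσK, ν, hνK, hσν, hν⟩ := mem_subcx.mp hσ
  have hle : ∀ ν ∈ K.cells, σ ⊆ ν → f τ ≤ f ν := fun ν hνK hσν =>
    not_lt.mp fun hlt => hσb (mem_subcx.mpr ⟨hσK, ν, hνK, hσν, hgap ν hνK hlt⟩)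
  obtain rfl : ν = τ := hinj hνK hτ (hν.antisymm (hle ν hνK hσν))
  obtain rfl | hσν := hσν.eq_or_ssubset
  · exact .inl rfl
  have hL : ∀ z ∈ ν \ σ, ν.erase z ∈ Lset f K ν := by
    intro z hz
    obtain ⟨hzν, hzσ⟩ := mem_sdiff.mp hz
    have hσz : σ ⊆ ν.erase z := subset_erase.mpr ⟨hσν.subset, hzσ⟩
    have hne := (K.nonempty_of_mem σ hσK).mono hσz
    exact erase_mem_Lset hνK hzν hne (hle _ (K.down_closed ν hνK _ (erase_subset z ν) hne) hσz)
  obtain ⟨z, hz, rfl⟩ := exists_eq_erase_of_forall_erase_mem_Lset hf hνK hσν hL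
  exact .inr (hL z hz)

lemma subcx_eq_insert_of_Lset_eq_empty (hf : IsDMF f K)
    (hinj : Set.InjOn f (K.cells : Set (Finset V))) (hτ : τ ∈ K.cells) (hb : b < f τ)
    (hgap : ∀ σ ∈ K.cells, f σ < f τ → f σ ≤ b) (hL : Lset f K τ = ∅) :
    subcx f K (f τ) = insert τ (subcx f K b) := by
  refine Subset.antisymm (fun σ hσ => ?_) (insert_subset (self_mem_subcx hτ) (subcx_mono hb.le))
  by_cases hσb : σ ∈ subcx f K b
  · exact mem_insert_of_mem hσb
  obtain rfl | hσL := eq_or_mem_Lset_of_mem_subcx hf hinj hτ hgap hσ hσb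
  · exact mem_insert_self σ _
  · simp [hL] at hσL

lemma mem_subcx_of_mem_Uset (hinj : Set.InjOn f (K.cells : Set (Finset V))) (hτ : τ ∈ K.cells)
    (hgap : ∀ σ ∈ K.cells, f σ < f τ → f σ ≤ b) (hν : ν ∈ Uset f K τ) : τ ∈ subcx f K b := by
  obtain ⟨hνK, hτν, -, hντ⟩ := mem_filter.mp hν
  have hlt : f ν < f τ := hντ.lt_of_ne fun h => hτν.ne (hinj hτ hνK h.symm)
  exact mem_subcx_of_subset hνK hτν.subset (K.nonempty_of_mem τ hτ) (hgap ν hνK hlt)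

lemma notMem_subcx_of_mem_Lset (hf : IsDMF f K) (hτ : τ ∈ K.cells) (hb : b < f τ)
    (hρ : ρ ∈ Lset f K τ) : ρ ∉ subcx f K b := by
  obtain ⟨hρK, hρτ, hcard, hτρ⟩ := mem_filter.mp hρ
  have hτU : τ ∈ Uset f K ρ := mem_filter.mpr ⟨hτ, hρτ, hcard, hτρ⟩
  intro hρb
  obtain ⟨-, ν, hνK, hρν, hν⟩ := mem_subcx.mp hρb
  obtain rfl | hρν := hρν.eq_or_ssubset
  · linarith
  · linarith [le_of_mem_Uset_of_ssubset hf hρK hτU hνK hρν]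

lemma elemCollapse_subcx (hf : IsDMF f K) (hinj : Set.InjOn f (K.cells : Set (Finset V)))
    (hτ : τ ∈ K.cells) (hb : b < f τ) (hgap : ∀ σ ∈ K.cells, f σ < f τ → f σ ≤ b)
    (hρ : ρ ∈ Lset f K τ) : ElemCollapse (subcx f K (f τ)) (subcx f K b) := by
  obtain ⟨hρK, hρτ, hcard, -⟩ := mem_filter.mp hρ
  have hρb := notMem_subcx_of_mem_Lset hf hτ hb hρ
  have hτb : τ ∉ subcx f K b := fun h =>
    hρb (subcx_down_closed τ h ρ hρτ.subset (K.nonempty_of_mem ρ hρK))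
  have hLρ : ∀ σ ∈ Lset f K τ, σ = ρ := fun σ hσ => card_le_one.mp (hf τ hτ).2 _ hσ _ hρ
  refine ⟨ρ, τ, mem_subcx_of_subset hτ hρτ.subset (K.nonempty_of_mem ρ hρK) le_rfl,
    self_mem_subcx hτ, hρτ, hcard, fun ν hν hρν => ?_, ?_⟩
  · have hνb : ν ∉ subcx f K b := fun h =>
      hρb (subcx_down_closed ν h ρ hρν.subset (K.nonempty_of_mem ρ hρK))
    refine (eq_or_mem_Lset_of_mem_subcx hf hinj hτ hgap hν hνb).resolve_right fun h => ?_
    exact hρν.ne (hLρ ν h).symm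
  ext σ
  simp only [mem_erase]
  refine ⟨fun hσ => ⟨ne_of_mem_of_not_mem hσ hτb, ne_of_mem_of_not_mem hσ hρb,
    subcx_mono hb.le hσ⟩, fun ⟨hστ, hσρ, hσ⟩ => ?_⟩
  by_contra hσb
  obtain h | h := eq_or_mem_Lset_of_mem_subcx hf hinj hτ hgap hσ hσb
  exacts [hστ h, hσρ (hLρ σ h)]

lemma reflTransGen_edgeStep_subcx_of_gap (hf : IsDMF f K)
    (hinj : Set.InjOn f (K.cells : Set (Finset V))) (hτ : τ ∈ K.cells) (hb : b < f τ)
    (hgap : ∀ σ ∈ K.cells, f σ < f τ → f σ ≤ b) (hτe : τ.card = 2 → ¬ IsCriticalCell f K τ)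
    {u v : V} (hu : ({u} : Finset V) ∈ subcx f K b) (hv : ({v} : Finset V) ∈ subcx f K b)
    (h : Relation.ReflTransGen (EdgeStep (subcx f K (f τ))) u v) :
    Relation.ReflTransGen (EdgeStep (subcx f K b)) u v := by
  obtain hL | ⟨ρ, hρ⟩ := (Lset f K τ).eq_empty_or_nonempty
  · rw [subcx_eq_insert_of_Lset_eq_empty hf hinj hτ hb hgap hL] at h
    obtain hU | ⟨ν, hν⟩ := (Uset f K τ).eq_empty_or_nonempty
    · exact reflTransGen_edgeStep_of_insert (fun h2 => hτe h2 ⟨hτ, hU, hL⟩) h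
    · rwa [insert_eq_of_mem (mem_subcx_of_mem_Uset hinj hτ hgap hν)] at h
  · exact (elemCollapse_subcx hf hinj hτ hb hgap hρ).reflTransGen_edgeStep
      subcx_down_closed hu hv h

end Gap

lemma reflTransGen_edgeStep_subcx_descend (hf : IsDMF f K)
    (hinj : Set.InjOn f (K.cells : Set (Finset V))) {a : ℝ}
    (H : ∀ e ∈ K.cells, e.card = 2 → IsCriticalCell f K e → f e ≤ a) {u v : V}
    (hu : ({u} : Finset V) ∈ subcx f K a) (hv : ({v} : Finset V) ∈ subcx f K a) (c : ℝ)
    (h : Relation.ReflTransGen (EdgeStep (subcx f K c)) u v) :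
    Relation.ReflTransGen (EdgeStep (subcx f K a)) u v := by
  induction hn : (K.cells.filter fun σ => a < f σ ∧ f σ ≤ c).card
    using Nat.strong_induction_on generalizing c with
  | _ n IH =>
  obtain hS | hS := (K.cells.filter fun σ => a < f σ ∧ f σ ≤ c).eq_empty_or_nonempty
  · refine reflTransGen_edgeStep_mono (subcx_subset_subcx fun σ hσ hσc => ?_) h
    by_contra! haσ
    exact filter_eq_empty_iff.mp hS hσ ⟨haσ, hσc⟩
  obtain ⟨τ, hτS, hmax⟩ := exists_max_image _ f hS
  obtain ⟨hτ, haτ, hτc⟩ := mem_filter.mp hτS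
  obtain ⟨b, hab, hbτ, hgap⟩ := exists_le_lt_forall_lt_imp_le (K.cells.image f) haτ
  have hcτ : subcx f K c ⊆ subcx f K (f τ) := subcx_subset_subcx fun σ hσ hσc =>
    (le_or_gt (f σ) a).elim (fun h => h.trans haτ.le) fun h => hmax σ (mem_filter.mpr ⟨hσ, h, hσc⟩)
  have hτb := reflTransGen_edgeStep_subcx_of_gap hf hinj hτ hbτ
    (fun σ hσ => hgap _ (mem_image_of_mem f hσ)) (fun h2 hcrit => (H τ hτ h2 hcrit).not_gt haτ)
    (subcx_mono hab hu) (subcx_mono hab hv) (reflTransGen_edgeStep_mono hcτ h)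
  refine IH _ ?_ b hτb rfl
  rw [← hn]
  refine card_lt_card ((ssubset_iff_of_subset fun σ hσ => ?_).mpr ⟨τ, hτS, fun h => ?_⟩)
  · simp only [mem_filter] at hσ ⊢
    exact ⟨hσ.1, hσ.2.1, hσ.2.2.trans (hbτ.le.trans hτc)⟩
  · exact (mem_filter.mp h).2.2.not_gt hbτ

lemma connectedIn_subcx_of_forall_criticalEdge_le (hf : IsDMF f K)
    (hinj : Set.InjOn f (K.cells : Set (Finset V))) (hconn : ConnectedIn K.cells) {a : ℝ}
    (H : ∀ e ∈ K.cells, e.card = 2 → IsCriticalCell f K e → f e ≤ a) :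
    ConnectedIn (subcx f K a) := by
  refine connectedIn_iff.mpr fun u v hu hv => ?_
  obtain ⟨c, hc⟩ := (K.cells.image f).exists_le
  have hKc : K.cells ⊆ subcx f K c := fun σ hσ =>
    mem_subcx_of_subset hσ subset_rfl (K.nonempty_of_mem σ hσ) (hc _ (mem_image_of_mem f hσ))
  refine reflTransGen_edgeStep_subcx_descend hf hinj H hu hv c ?_
  exact reflTransGen_edgeStep_mono hKc
    (connectedIn_iff.mp hconn u v (mem_subcx.mp hu).1 (mem_subcx.mp hv).1)

end Morse

theorem stmt19_general (f : Finset V → ℝ) (K : SComplex V) (hf : IsDMF f K)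
    (hinj : Set.InjOn f (K.cells : Set (Finset V))) (hconn : ConnectedIn K.cells)
    (v₁ : V) (hdisc : ¬ ConnectedIn (subcx f K (f ({v₁} : Finset V)))) :
    ∃ e ∈ K.cells, e.card = 2 ∧ IsCriticalCell f K e ∧ f ({v₁} : Finset V) < f e := by
  by_contra hno
  push Not at hno
  exact hdisc (connectedIn_subcx_of_forall_criticalEdge_le hf hinj hconn hno)

theorem stmt19 (f : Finset V → ℝ) (K : SComplex V) (hf : IsDMF f K)
    (hinj : Set.InjOn f (K.cells : Set (Finset V))) (hconn : ConnectedIn K.cells)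
    (v₁ : V) (h1 : IsCriticalCell f K ({v₁} : Finset V))
    (hnotmin : ∃ w : V, ({w} : Finset V) ∈ K.cells ∧ f ({w} : Finset V) < f ({v₁} : Finset V))
    (hdisc : ¬ ConnectedIn (subcx f K (f ({v₁} : Finset V)))) :
    ∃ e ∈ K.cells, e.card = 2 ∧ IsCriticalCell f K e ∧ f ({v₁} : Finset V) < f e :=
  stmt19_general f K hf hinj hconn v₁ hdisc
end
end
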